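/- In B_4, if β, β', β'', β''' are strongly quasipositive braids (possibly trivial), then the braid σ_{1,2}^{−1} β σ_{1,3} β' σ_{2,4} β'' σ_{3,4} β''' is quasipositive. -/

import Mathlib

/-- Relations for the braid group `Bₙ`: the generator `k : Fin (n-1)` represents `σ_{k+1}`,
and we impose `σ_i σ_j = σ_j σ_i` for `|i - j| > 1` and `σ_i σ_{i+1} σ_i = σ_{i+1} σ_i σ_{i+1}`. -/
def braidRels (n : ℕ) : Set (FreeGroup (Fin (n - 1))) :=
  {r | ∃ i j : Fin (n - 1), (i : ℕ) + 1 < (j : ℕ) ∧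
      r = FreeGroup.of i * FreeGroup.of j * (FreeGroup.of i)⁻¹ * (FreeGroup.of j)⁻¹} ∪
  {r | ∃ i j : Fin (n - 1), (j : ℕ) = (i : ℕ) + 1 ∧
      r = FreeGroup.of i * FreeGroup.of j * FreeGroup.of i *
          (FreeGroup.of j * FreeGroup.of i * FreeGroup.of j)⁻¹}

/-- The braid group on `n` strands, presented with generators `σ_1, …, σ_{n-1}`. -/
abbrev BraidGroup (n : ℕ) : Type := PresentedGroup (braidRels n)

/-- The standard generator `σ_i` of `Bₙ`, for `1 ≤ i ≤ n - 1` (junk value `1` otherwise). -/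
def sigma (n i : ℕ) : BraidGroup n :=
  if h : 1 ≤ i ∧ i ≤ n - 1 then PresentedGroup.of ⟨i - 1, by omega⟩ else 1

/-- The word `σ_{j-1} σ_{j-2} ⋯ σ_{i+1}`. -/
def bandConj (n i j : ℕ) : BraidGroup n :=
  ((List.range (j - 1 - i)).map fun t => sigma n (j - 1 - t)).prod

/-- The band generator `σ_{i,j} = (σ_{j-1} σ_{j-2} ⋯ σ_{i+1}) σ_i (σ_{j-1} σ_{j-2} ⋯ σ_{i+1})⁻¹`.
In particular `σ_{i,i+1} = σ_i`. -/
def band (n i j : ℕ) : BraidGroup n :=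
  bandConj n i j * sigma n i * (bandConj n i j)⁻¹

/-- The set of band generators `σ_{i,j}`, `1 ≤ i < j ≤ n`, of `Bₙ`. -/
def bandGens (n : ℕ) : Set (BraidGroup n) :=
  {x | ∃ i j : ℕ, 1 ≤ i ∧ i < j ∧ j ≤ n ∧ x = band n i j}

/-- A braid is strongly quasipositive if it is a product of band generators, i.e. lies in the
submonoid generated by the `σ_{i,j}`, `1 ≤ i < j ≤ n`. -/
def StronglyQuasipositive (n : ℕ) (x : BraidGroup n) : Prop :=
  x ∈ Submonoid.closure (bandGens n)

/-- A braid is quasipositive if it lies in the submonoid generated by all conjugates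
`α σ_k α⁻¹` of the standard generators. -/
def Quasipositive (n : ℕ) (x : BraidGroup n) : Prop :=
  x ∈ Submonoid.closure
    {x : BraidGroup n | ∃ (α : BraidGroup n) (k : ℕ), 1 ≤ k ∧ k ≤ n - 1 ∧ x = α * sigma n k * α⁻¹}

/-!
Rewriting each band generator through the standard generators, `σ_{1,3} = σ₂ σ₁ σ₂⁻¹` and
`σ_{2,4} = σ₃ σ₂ σ₃⁻¹`, the braid telescopes, without using any braid relation, into
`(σ₁⁻¹ β σ₁) (σ₁⁻¹ σ₂ σ₁) (σ₂⁻¹ β' σ₂) (σ₂⁻¹ σ₃ σ₂) (σ₃⁻¹ β'' σ₃) β'''`.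
Strongly quasipositive braids are quasipositive, and quasipositivity is invariant under
conjugation, so every factor is quasipositive.
-/

section Quasipositive

variable {n : ℕ}

theorem quasipositive_conj_sigma (α : BraidGroup n) {k : ℕ} (hk₁ : 1 ≤ k) (hk₂ : k ≤ n - 1) :
    Quasipositive n (α * sigma n k * α⁻¹) :=
  Submonoid.subset_closure ⟨α, k, hk₁, hk₂, rfl⟩

theorem Quasipositive.mul {x y : BraidGroup n} (hx : Quasipositive n x)
    (hy : Quasipositive n y) : Quasipositive n (x * y) :=
  Submonoid.mul_mem _ hx hy

theorem Quasipositive.conj {x : BraidGroup n} (hx : Quasipositive n x) (α : BraidGroup n) :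
    Quasipositive n (α * x * α⁻¹) := by
  induction hx using Submonoid.closure_induction with
  | mem y hy =>
    obtain ⟨γ, k, hk₁, hk₂, rfl⟩ := hy
    simpa only [mul_assoc, mul_inv_rev] using quasipositive_conj_sigma (α * γ) hk₁ hk₂
  | one =>
    rw [mul_one, mul_inv_cancel]
    exact Submonoid.one_mem _
  | mul y z _ _ hy hz =>
    simpa only [mul_assoc, inv_mul_cancel_left] using hy.mul hz

theorem StronglyQuasipositive.quasipositive {x : BraidGroup n}
    (hx : StronglyQuasipositive n x) : Quasipositive n x := by
  refine Submonoid.closure_mono ?_ hx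
  rintro _ ⟨i, j, hi, hij, hj, rfl⟩
  exact ⟨bandConj n i j, i, hi, by omega, rfl⟩

end Quasipositive

theorem band_succ (n i : ℕ) : band n i (i + 1) = sigma n i := by
  simp [band, bandConj]

theorem band_add_two (n i : ℕ) :
    band n i (i + 2) = sigma n (i + 1) * sigma n i * (sigma n (i + 1))⁻¹ := by
  simp [band, bandConj]

/-- In `B₄`, for strongly quasipositive `β, β', β'', β'''`, the braid
`σ_{1,2}⁻¹ β σ_{1,3} β' σ_{2,4} β'' σ_{3,4} β'''` is quasipositive. -/
theorem claim_R_case2 (β β' β'' β''' : BraidGroup 4)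
    (hβ : StronglyQuasipositive 4 β) (hβ' : StronglyQuasipositive 4 β')
    (hβ'' : StronglyQuasipositive 4 β'') (hβ''' : StronglyQuasipositive 4 β''') :
    Quasipositive 4
      ((band 4 1 2)⁻¹ * β * band 4 1 3 * β' * band 4 2 4 * β'' * band 4 3 4 * β''') := by
  rw [band_succ 4 1, band_add_two 4 1, band_add_two 4 2, band_succ 4 3]
  set σ := sigma 4
  have telescope :
      (σ 1)⁻¹ * β * (σ 2 * σ 1 * (σ 2)⁻¹) * β' * (σ 3 * σ 2 * (σ 3)⁻¹) * β'' * σ 3 * β''' =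
        ((σ 1)⁻¹ * β * (σ 1)⁻¹⁻¹) * ((σ 1)⁻¹ * σ 2 * (σ 1)⁻¹⁻¹) *
        ((σ 2)⁻¹ * β' * (σ 2)⁻¹⁻¹) * ((σ 2)⁻¹ * σ 3 * (σ 2)⁻¹⁻¹) *
        ((σ 3)⁻¹ * β'' * (σ 3)⁻¹⁻¹) * β''' := by
    group
  have hσ₂ := quasipositive_conj_sigma (σ 1)⁻¹ (k := 2) (by norm_num) (by norm_num)
  have hσ₃ := quasipositive_conj_sigma (σ 2)⁻¹ (k := 3) (by norm_num) (by norm_num)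
  rw [telescope]
  exact (((((hβ.quasipositive.conj _).mul hσ₂).mul (hβ'.quasipositive.conj _)).mul hσ₃).mul
    (hβ''.quasipositive.conj _)).mul hβ'''.quasipositive
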